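/- arXiv:1805.03736 — 2 statements merged into one kernel-verified Lean document; each statement's English description precedes it below -/
import Mathlib

section
/- If the κ-core of a graphon w has positive Lebesgue measure, then its measure is at least κ: |K_κ(w)| > 0 implies |K_κ(w)| ≥ κ. -/
open MeasureTheory Set Filter

/-- A graphon: symmetric measurable `w : [0,1]² → [0,1]` (stated on all of ℝ²). -/
def Graphon (w : ℝ → ℝ → ℝ) : Prop :=
  Measurable (Function.uncurry w) ∧ (∀ x y, w x y = w y x) ∧
    ∀ x y, w x y ∈ Set.Icc (0 : ℝ) 1

/-- Degree of `x` restricted to `K`: `d_w^K(x) = ∫_K w(x,y) dy`. -/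
noncomputable def degK (w : ℝ → ℝ → ℝ) (K : Set ℝ) (x : ℝ) : ℝ := ∫ y in K, w x y

/-- Iterated peeling sets: `coreIter w κ n = K^{n+1}_κ(w)` (so index 0 is `K¹`). -/
noncomputable def coreIter (w : ℝ → ℝ → ℝ) (κ : ℝ) : ℕ → Set ℝ
  | 0 => {x ∈ Set.Icc (0 : ℝ) 1 | κ ≤ degK w (Set.Icc 0 1) x}
  | n + 1 => {x ∈ coreIter w κ n | κ ≤ degK w (coreIter w κ n) x}

/-- The κ-core `K_κ(w) = ⋂ₙ K^n_κ(w)`. -/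
noncomputable def core (w : ℝ → ℝ → ℝ) (κ : ℝ) : Set ℝ := ⋂ n, coreIter w κ n

/-- Shell index `δ_x(w) = sup {κ : x ∈ K_κ(w)}`. -/
noncomputable def shell (w : ℝ → ℝ → ℝ) (x : ℝ) : ℝ := sSup {κ | x ∈ core w κ}

/-- Degeneracy `δ(w) = sup {κ : |K_κ(w)| > 0}`. -/
noncomputable def degen (w : ℝ → ℝ → ℝ) : ℝ := sSup {κ | 0 < volume (core w κ)}

/-- Cut-norm distance `d_□`. -/
noncomputable def cutDist (w w' : ℝ → ℝ → ℝ) : ℝ :=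
  sSup {r | ∃ S T : Set ℝ, MeasurableSet S ∧ MeasurableSet T ∧
    S ⊆ Set.Icc 0 1 ∧ T ⊆ Set.Icc 0 1 ∧
    r = |∫ x in S, ∫ y in T, (w x y - w' x y)|}

/-- A measure-preserving map of `[0,1]`. -/
def MPMap (σ : ℝ → ℝ) : Prop :=
  Measurable σ ∧ Set.MapsTo σ (Set.Icc 0 1) (Set.Icc 0 1) ∧
    ∀ A : Set ℝ, MeasurableSet A → A ⊆ Set.Icc 0 1 →
      volume (σ ⁻¹' A ∩ Set.Icc 0 1) = volume A

/-- Cut metric `δ_□(w,w') = inf_σ d_□(w^σ, w')`. -/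
noncomputable def cutMetric (w w' : ℝ → ℝ → ℝ) : ℝ :=
  sInf {r | ∃ σ : ℝ → ℝ, MPMap σ ∧ r = cutDist (fun x y => w (σ x) (σ y)) w'}

lemma degK_measurable (w : ℝ → ℝ → ℝ) (hw : Graphon w) (K : Set ℝ) :
    Measurable (degK w K) := by
  have : StronglyMeasurable (Function.uncurry w) := hw.1.stronglyMeasurable
  exact (this.integral_prod_right').measurable

lemma coreIter_subset (w : ℝ → ℝ → ℝ) (κ : ℝ) :
    ∀ n, coreIter w κ n ⊆ Set.Icc (0 : ℝ) 1
  | 0 => fun x hx => hx.1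
  | n + 1 => fun x hx => coreIter_subset w κ n hx.1

lemma coreIter_measurable (w : ℝ → ℝ → ℝ) (hw : Graphon w) (κ : ℝ) :
    ∀ n, MeasurableSet (coreIter w κ n)
  | 0 => measurableSet_Icc.inter
      ((degK_measurable w hw _) measurableSet_Ici)
  | n + 1 => (coreIter_measurable w hw κ n).inter
      ((degK_measurable w hw _) measurableSet_Ici)

lemma degK_le (w : ℝ → ℝ → ℝ) (hw : Graphon w) (K : Set ℝ)
    (hK : volume K ≠ ⊤) (x : ℝ) : degK w K x ≤ (volume K).toReal := by
  have hmeas : Measurable (w x) := hw.1.of_uncurry_left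
  haveI : IsFiniteMeasure (volume.restrict K) := ⟨by simpa [Measure.restrict_apply_univ, lt_top_iff_ne_top] using hK⟩
  have hint : Integrable (w x) (volume.restrict K) := by
    refine (integrable_const (1 : ℝ)).mono' hmeas.aestronglyMeasurable ?_
    · filter_upwards with y
      rw [Real.norm_eq_abs, abs_le]
      exact ⟨le_trans (by norm_num) (hw.2.2 x y).1, (hw.2.2 x y).2⟩
  have : degK w K x ≤ ∫ _ in K, (1 : ℝ) := by
    refine integral_mono hint (integrable_const 1) fun y => (hw.2.2 x y).2
  simpa [Measure.restrict_apply_univ, measureReal_def] using this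

theorem stmt4 (w : ℝ → ℝ → ℝ) (hw : Graphon w) (κ : ℝ)
    (h : 0 < volume (core w κ)) : ENNReal.ofReal κ ≤ volume (core w κ) := by
  obtain ⟨x, hx⟩ : (core w κ).Nonempty := nonempty_of_measure_ne_zero h.ne'
  have hfin : ∀ n, volume (coreIter w κ n) ≠ ⊤ := fun n =>
    (lt_of_le_of_lt (measure_mono (coreIter_subset w κ n))
      (by simp : volume (Set.Icc (0:ℝ) 1) < ⊤)).ne
  have hκn : ∀ n, ENNReal.ofReal κ ≤ volume (coreIter w κ n) := by
    intro n
    have hxn : x ∈ coreIter w κ (n + 1) := by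
      have := Set.mem_iInter.1 hx (n + 1); exact this
    have hκ : κ ≤ degK w (coreIter w κ n) x := hxn.2
    have hle : κ ≤ (volume (coreIter w κ n)).toReal :=
      hκ.trans (degK_le w hw _ (hfin n) x)
    calc ENNReal.ofReal κ ≤ ENNReal.ofReal (volume (coreIter w κ n)).toReal :=
          ENNReal.ofReal_le_ofReal hle
      _ = volume (coreIter w κ n) := ENNReal.ofReal_toReal (hfin n)
  have hanti : Antitone (coreIter w κ) := by
    refine antitone_nat_of_succ_le fun n => fun y hy => hy.1
  have hmeq : volume (core w κ) = ⨅ n, volume (coreIter w κ n) := by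
    refine Directed.measure_iInter
      (fun n => (coreIter_measurable w hw κ n).nullMeasurableSet) (hanti.directed_ge) ⟨0, hfin 0⟩
  rw [hmeq]
  exact le_iInf hκn
end

section
/- The shell index function x ↦ δ_x(w) is Lebesgue measurable, and for each κ ∈ [0,1], the preimage {x : δ_x(w) ≥ κ} equals the κ-core K_κ(w). -/
open MeasureTheory Set Filter Topology

section ShellAux

variable {w : ℝ → ℝ → ℝ}

lemma degK_nonneg (hw : Graphon w) (K : Set ℝ) (x : ℝ) : 0 ≤ degK w K x :=
  integral_nonneg fun y => (hw.2.2 x y).1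

lemma integrableOn_w (hw : Graphon w) {K : Set ℝ} (hK1 : K ⊆ Set.Icc 0 1) (x : ℝ) :
    IntegrableOn (w x) K := by
  have hm : Measurable (w x) := hw.1.comp (measurable_prodMk_left)
  haveI : IsFiniteMeasure (volume.restrict K) := by
    constructor
    rw [Measure.restrict_apply_univ]
    exact lt_of_le_of_lt (measure_mono hK1) (by simp)
  refine Integrable.mono' (integrable_const 1) hm.aestronglyMeasurable ?_
  refine Eventually.of_forall fun y => ?_
  rw [Real.norm_eq_abs, abs_of_nonneg (hw.2.2 x y).1]
  exact (hw.2.2 x y).2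

lemma degK_le_one (hw : Graphon w) {K : Set ℝ} (hK1 : K ⊆ Set.Icc 0 1) (x : ℝ) :
    degK w K x ≤ 1 := by
  haveI : IsFiniteMeasure (volume.restrict K) := by
    constructor
    rw [Measure.restrict_apply_univ]
    exact lt_of_le_of_lt (measure_mono hK1) (by simp)
  have h1 : degK w K x ≤ ∫ _y in K, (1:ℝ) :=
    integral_mono (integrableOn_w hw hK1 x) (integrable_const 1) fun y => (hw.2.2 x y).2
  have h2 : ∫ _y in K, (1:ℝ) = (volume K).toReal := by
    simp [Measure.restrict_apply_univ, Measure.real]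
  refine h1.trans ?_
  rw [h2]
  have : volume K ≤ 1 := le_trans (measure_mono hK1) (by simp [Real.volume_Icc])
  exact ENNReal.toReal_le_of_le_ofReal zero_le_one (by simpa using this)

lemma degK_mono (hw : Graphon w) {K K' : Set ℝ} (hK' : K' ⊆ Set.Icc 0 1)
    (h : K ⊆ K') (x : ℝ) : degK w K x ≤ degK w K' x :=
  setIntegral_mono_set (integrableOn_w hw hK' x)
    (Eventually.of_forall fun y => (hw.2.2 x y).1) (HasSubset.Subset.eventuallyLE h)

lemma measurable_degK (hw : Graphon w) (K : Set ℝ) : Measurable (degK w K) := by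
  have h : StronglyMeasurable (Function.uncurry w) := hw.1.stronglyMeasurable
  exact (h.integral_prod_right' (ν := volume.restrict K)).measurable

lemma coreIter_subset_Icc (κ : ℝ) : ∀ n, coreIter w κ n ⊆ Set.Icc 0 1
  | 0 => fun _ hx => hx.1
  | n + 1 => fun x hx => coreIter_subset_Icc κ n hx.1

lemma measurable_coreIter (hw : Graphon w) (κ : ℝ) :
    ∀ n, MeasurableSet (coreIter w κ n)
  | 0 => measurableSet_Icc.inter (measurableSet_le measurable_const (measurable_degK hw _))
  | n + 1 => (measurable_coreIter hw κ n).inter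
      (measurableSet_le measurable_const (measurable_degK hw _))

lemma coreIter_anti (hw : Graphon w) {κ κ' : ℝ} (h : κ' ≤ κ) :
    ∀ n, coreIter w κ n ⊆ coreIter w κ' n
  | 0 => fun x hx => ⟨hx.1, h.trans hx.2⟩
  | n + 1 => fun x hx => ⟨coreIter_anti hw h n hx.1,
      le_trans (h.trans hx.2)
        (degK_mono hw (coreIter_subset_Icc κ' n) (coreIter_anti hw h n) x)⟩

lemma core_anti (hw : Graphon w) {κ κ' : ℝ} (h : κ' ≤ κ) : core w κ ⊆ core w κ' := by
  intro x hx
  exact Set.mem_iInter.2 fun n => coreIter_anti hw h n (Set.mem_iInter.1 hx n)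

lemma Icc_subset_core_zero (hw : Graphon w) : Set.Icc 0 1 ⊆ core w 0 := by
  intro x hx
  refine Set.mem_iInter.2 fun n => ?_
  induction n with
  | zero => exact ⟨hx, degK_nonneg hw _ x⟩
  | succ n ih => exact ⟨ih, degK_nonneg hw _ x⟩

lemma le_one_of_mem_core (hw : Graphon w) {κ x : ℝ} (hx : x ∈ core w κ) : κ ≤ 1 := by
  have h0 := Set.mem_iInter.1 hx 0
  exact h0.2.trans (degK_le_one hw (fun y hy => hy) x)

lemma bddAbove_shellSet (hw : Graphon w) (x : ℝ) : BddAbove {κ | x ∈ core w κ} :=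
  ⟨1, fun κ hκ => le_one_of_mem_core hw hκ⟩

lemma shell_set_empty {x : ℝ} (hx : x ∉ Set.Icc (0:ℝ) 1) : {κ | x ∈ core w κ} = ∅ := by
  ext κ; simp only [Set.mem_setOf_eq, Set.mem_empty_iff_false, iff_false]
  intro h
  exact hx (coreIter_subset_Icc κ 0 (Set.mem_iInter.1 h 0))

lemma shell_eq_zero {x : ℝ} (hx : x ∉ Set.Icc (0:ℝ) 1) : shell w x = 0 := by
  rw [shell, shell_set_empty hx, Real.sSup_empty]

lemma shell_nonneg (hw : Graphon w) {x : ℝ} (hx : x ∈ Set.Icc (0:ℝ) 1) : 0 ≤ shell w x :=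
  le_csSup (bddAbove_shellSet hw x) (Icc_subset_core_zero hw hx)

lemma shell_le_one (hw : Graphon w) (x : ℝ) : shell w x ≤ 1 := by
  rcases Set.eq_empty_or_nonempty {κ | x ∈ core w κ} with h | h
  · rw [shell, h, Real.sSup_empty]; exact zero_le_one
  · exact csSup_le h fun κ hκ => le_one_of_mem_core hw hκ

lemma coreIter_iInter (hw : Graphon w) {κ : ℝ} (κs : ℕ → ℝ) (hmono : Monotone κs)
    (hle : ∀ m, κs m ≤ κ) (htend : Tendsto κs atTop (𝓝 κ)) :
    ∀ n, coreIter w κ n = ⋂ m, coreIter w (κs m) n := by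
  intro n
  induction n with
  | zero =>
    apply Set.Subset.antisymm
    · exact Set.subset_iInter fun m => coreIter_anti hw (hle m) 0
    · intro x hx
      have h0 := Set.mem_iInter.1 hx 0
      refine ⟨h0.1, ?_⟩
      exact le_of_tendsto htend (Eventually.of_forall fun m => (Set.mem_iInter.1 hx m).2)
  | succ n ih =>
    apply Set.Subset.antisymm
    · exact Set.subset_iInter fun m => coreIter_anti hw (hle m) (n + 1)
    · intro x hx
      have hmem : ∀ m, x ∈ coreIter w (κs m) n := fun m => (Set.mem_iInter.1 hx m).1
      have hx0 : x ∈ coreIter w κ n := by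
        rw [ih]; exact Set.mem_iInter.2 hmem
      refine ⟨hx0, ?_⟩
      have hanti : Antitone fun m => coreIter w (κs m) n :=
        fun a b hab => coreIter_anti hw (hmono hab) n
      have htendI : Tendsto (fun m => degK w (coreIter w (κs m) n) x) atTop
          (𝓝 (degK w (⋂ m, coreIter w (κs m) n) x)) :=
        tendsto_setIntegral_of_antitone (fun m => measurable_coreIter hw _ n) hanti
          ⟨0, integrableOn_w hw (coreIter_subset_Icc _ n) x⟩
      rw [← ih] at htendI
      exact le_of_tendsto_of_tendsto' htend htendI fun m => (Set.mem_iInter.1 hx m).2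

lemma mem_core_of_le_shell (hw : Graphon w) {x κ : ℝ} (hx : x ∈ Set.Icc (0:ℝ) 1)
    (h : κ ≤ shell w x) : x ∈ core w κ := by
  rcases le_or_gt κ 0 with hκ | hκ
  · exact core_anti hw hκ (Icc_subset_core_zero hw hx)
  · set κs : ℕ → ℝ := fun m => κ - 1 / (m + 1) with hκs
    have hpos : ∀ m : ℕ, (0:ℝ) < 1 / (m + 1) := fun m => by positivity
    have hlt : ∀ m, κs m < κ := fun m => by
      simp only [hκs]; linarith [hpos m]
    have hmono : Monotone κs := by
      intro a b hab
      have h1 : (1:ℝ) / (b + 1) ≤ 1 / (a + 1) := by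
        apply one_div_le_one_div_of_le (by positivity)
        have : (a:ℝ) ≤ b := Nat.cast_le.2 hab
        linarith
      simp only [hκs]; linarith
    have htend : Tendsto κs atTop (𝓝 κ) := by
      have := tendsto_one_div_add_atTop_nhds_zero_nat (𝕜 := ℝ)
      have h2 := (tendsto_const_nhds (x := κ) (f := atTop)).sub this
      simpa [hκs, one_div] using h2
    have hmem : ∀ m, x ∈ core w (κs m) := by
      intro m
      have hne : {κ' | x ∈ core w κ'}.Nonempty := ⟨0, Icc_subset_core_zero hw hx⟩
      obtain ⟨κ', hκ', hlt'⟩ := exists_lt_of_lt_csSup hne (lt_of_lt_of_le (hlt m) h)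
      exact core_anti hw hlt'.le hκ'
    refine Set.mem_iInter.2 fun n => ?_
    rw [coreIter_iInter hw κs hmono (fun m => (hlt m).le) htend n]
    exact Set.mem_iInter.2 fun m => Set.mem_iInter.1 (hmem m) n

end ShellAux

theorem stmt7 (w : ℝ → ℝ → ℝ) (hw : Graphon w) :
    Measurable (shell w) ∧
    ∀ κ ∈ Set.Icc (0 : ℝ) 1, {x ∈ Set.Icc (0 : ℝ) 1 | κ ≤ shell w x} = core w κ := by
  have hcore_meas : ∀ κ : ℝ, MeasurableSet (core w κ) := fun κ =>
    MeasurableSet.iInter fun n => measurable_coreIter hw κ n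
  constructor
  · apply measurable_of_Ici
    intro κ
    rcases le_or_gt κ 0 with h0 | h0
    · have : shell w ⁻¹' Set.Ici κ = Set.univ := by
        ext x
        simp only [Set.mem_preimage, Set.mem_Ici, Set.mem_univ, iff_true]
        by_cases hx : x ∈ Set.Icc (0:ℝ) 1
        · exact h0.trans (shell_nonneg hw hx)
        · rw [shell_eq_zero hx]; exact h0
      rw [this]; exact MeasurableSet.univ
    · rcases le_or_gt κ 1 with h1 | h1
      · have : shell w ⁻¹' Set.Ici κ = core w κ := by
          ext x
          simp only [Set.mem_preimage, Set.mem_Ici]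
          constructor
          · intro h
            by_cases hx : x ∈ Set.Icc (0:ℝ) 1
            · exact mem_core_of_le_shell hw hx h
            · rw [shell_eq_zero hx] at h; linarith
          · intro h
            exact le_csSup (bddAbove_shellSet hw x) h
        rw [this]; exact hcore_meas κ
      · have : shell w ⁻¹' Set.Ici κ = ∅ := by
          ext x
          simp only [Set.mem_preimage, Set.mem_Ici, Set.mem_empty_iff_false, iff_false, not_le]
          exact lt_of_le_of_lt (shell_le_one hw x) h1
        rw [this]; exact MeasurableSet.empty
  · intro κ hκ
    ext x
    simp only [Set.mem_setOf_eq]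
    constructor
    · rintro ⟨hx, h⟩
      exact mem_core_of_le_shell hw hx h
    · intro h
      exact ⟨coreIter_subset_Icc κ 0 (Set.mem_iInter.1 h 0),
        le_csSup (bddAbove_shellSet hw x) h⟩
end
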